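/- arXiv:2512.11100 — 3 statements merged into one kernel-verified Lean document; each statement's English description precedes it below -/
import Mathlib

section
/- In the DSS on a chain of L sites with an absorbing boundary at site L+1, start from any initial state consisting of a stable configuration z ∈ {0,1}^L together with an arbitrary finite collection of waiting particles on the sites. Then the stabilization process terminates almost surely, and the probability distribution of the final stable configuration in {0,1}^L does not depend on the order in which waiting particles are selected for evolution: any two rules for choosing which waiting particle to evolve next yield, upon iteration until no waiting particle remains, the same distribution on {0,1}^L. -/
/-!
Every elementary step strictly decreases `fuel = 2 * potential + #waiting`: a toppling or a jump
moves weight `L + 1 - x` to the strictly smaller weight of `x + 1` (or out of the system), which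
pays for the extra waiting particle a toppling creates, and a settling keeps the potential but
removes a waiting particle. Hence every run stops within `fuel s` steps, and `stabilizeAux` is
eventually constant in the number of steps.

Rule independence is the abelian property: the evolutions of two distinct waiting particles
commute as random maps (`expectAfter_comm`). By induction on `fuel`, a function satisfying the
one-step equation along the choices of one rule therefore satisfies it at every waiting
particle, and the stopped value of any rule is forced to equal such a function.
-/

namespace DSS

/-- A state of the DSS on `L` sites: a stable field `z : Fin L → Bool` together with a
finite multiset `w` of waiting particles (particles past site `L` have left the system). -/
structure State (L : ℕ) where
  z : Fin L → Bool
  w : Multiset (Fin L)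

variable {L : ℕ}

/-- The multiset holding the right neighbour of `x`; empty if the particle leaves the system. -/
def succSite (L : ℕ) (x : Fin L) : Multiset (Fin L) :=
  if h : x.val + 1 < L then {(⟨x.val + 1, h⟩ : Fin L)} else 0

/-- Evolution of a waiting particle at `x` when `z x = 1`: the waiting particle moves to
`x+1` and the stable particle at `x` becomes a waiting particle at `x`. -/
def topple (s : State L) (x : Fin L) : State L :=
  ⟨Function.update s.z x false, s.w + succSite L x⟩

/-- Evolution of a waiting particle at `x` when `z x = 0`, settling branch (probability p). -/
def settle (s : State L) (x : Fin L) : State L :=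
  ⟨Function.update s.z x true, s.w.erase x⟩

/-- Evolution of a waiting particle at `x` when `z x = 0`, jumping branch (probability q). -/
def jump (s : State L) (x : Fin L) : State L :=
  ⟨s.z, s.w.erase x + succSite L x⟩

/-- `stabilizeAux p q R n s c` is the probability that, evolving one waiting particle at a
time (the particle being selected by the rule `R`), the process started from `s` reaches
within `n` elementary steps a stable state whose stable field is `c`. -/
noncomputable def stabilizeAux (p q : ℝ) (R : State L → Option (Fin L)) :
    ℕ → State L → (Fin L → Bool) → ℝ
  | 0, s, c => if s.w = 0 ∧ s.z = c then 1 else 0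
  | n + 1, s, c =>
    match R s with
    | none => if s.z = c then 1 else 0
    | some x =>
      if s.z x then stabilizeAux p q R n (topple s x) c
      else p * stabilizeAux p q R n (settle s x) c
        + q * stabilizeAux p q R n (jump s x) c

/-- The canonical evolution rule: evolve the leftmost waiting particle. -/
def minRule (s : State L) : Option (Fin L) :=
  if h : s.w = 0 then none
  else some (s.w.toFinset.min'
    (Finset.nonempty_iff_ne_empty.mpr (by simpa [Multiset.toFinset_eq_empty] using h)))

/-- A termination measure: the stabilization process started from `s` ends after at most
`fuel s` elementary steps, whatever the rule and the randomness. -/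
def potential (s : State L) : ℕ :=
  (s.w.map fun x => L + 1 - x.val).sum + ∑ x : Fin L, (if s.z x then L + 1 - x.val else 0)

def fuel (s : State L) : ℕ := 2 * potential s + Multiset.card s.w

/-- Add one waiting particle at site `1` (index `0`). -/
def addGrain (r : Fin L → Bool) : State L :=
  ⟨r, if h : 0 < L then {(⟨0, h⟩ : Fin L)} else 0⟩

/-- The driven-dissipative transition kernel `W` of the DSS: add a particle at site 1 and
stabilize. -/
noncomputable def Wker (p q : ℝ) (r r' : Fin L → Bool) : ℝ :=
  stabilizeAux p q minRule (fuel (addGrain r)) (addGrain r) r'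

/-- `W` as a matrix on stable configurations. -/
noncomputable def Wmat (p q : ℝ) (L : ℕ) :
    Matrix (Fin L → Bool) (Fin L → Bool) ℝ :=
  Matrix.of fun r r' => Wker p q r r'

/-- The product Bernoulli(p) measure `ψ(r) = p^(Σ r) q^(L - Σ r)`. -/
noncomputable def psi (p q : ℝ) {L : ℕ} (r : Fin L → Bool) : ℝ :=
  p ^ (Finset.univ.filter fun x => r x = true).card *
    q ^ (L - (Finset.univ.filter fun x => r x = true).card)


/-- An evolution rule: in every state with at least one waiting particle it selects a site
carrying a waiting particle, and it selects nothing exactly on stable states. -/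
def IsRule {L : ℕ} (R : State L → Option (Fin L)) : Prop :=
  (∀ s : State L, R s = none ↔ s.w = 0) ∧
    (∀ (s : State L) (x : Fin L), R s = some x → x ∈ s.w)

lemma sum_ite_update_add {ι : Type*} [Fintype ι] [DecidableEq ι] (z : ι → Bool) (x : ι)
    (b : Bool) (g : ι → ℕ) :
    (∑ y, if Function.update z x b y then g y else 0) + (if z x then g x else 0)
      = (∑ y, if z y then g y else 0) + (if b then g x else 0) := by
  rw [← Finset.add_sum_erase _ _ (Finset.mem_univ x),
    ← Finset.add_sum_erase _ (fun y => if z y then g y else 0) (Finset.mem_univ x),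
    Finset.sum_congr rfl fun y hy => by rw [Function.update_of_ne (Finset.ne_of_mem_erase hy)]]
  simp only [Function.update_self]
  ring

lemma sum_map_succSite_add_le (x : Fin L) :
    ((succSite L x).map fun y : Fin L => L + 1 - y.val).sum + x.val ≤ L := by
  unfold succSite
  split <;> simp

lemma card_succSite_le (x : Fin L) : Multiset.card (succSite L x) ≤ 1 := by
  unfold succSite
  split <;> simp

lemma fuel_topple_lt {s : State L} {x : Fin L} (h : s.z x = true) :
    fuel (topple s x) < fuel s := by
  have hz := sum_ite_update_add s.z x false fun y => L + 1 - y.val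
  have := sum_map_succSite_add_le x
  have := card_succSite_le x
  have := x.isLt
  simp only [h, if_true, Bool.false_eq_true, if_false] at hz
  unfold fuel potential
  rw [show (topple s x).z = Function.update s.z x false from rfl]
  simp only [topple, Multiset.map_add, Multiset.sum_add, Multiset.card_add]
  omega

lemma fuel_settle_lt {s : State L} {x : Fin L} (hx : x ∈ s.w) (h : s.z x = false) :
    fuel (settle s x) < fuel s := by
  have hz := sum_ite_update_add s.z x true fun y => L + 1 - y.val
  have := Multiset.sum_map_erase (f := fun y : Fin L => L + 1 - y.val) hx
  have := Multiset.card_erase_add_one hx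
  have := x.isLt
  simp only [h, if_true, Bool.false_eq_true, if_false] at hz
  unfold fuel potential
  rw [show (settle s x).z = Function.update s.z x true from rfl]
  simp only [settle]
  omega

lemma fuel_jump_lt {s : State L} {x : Fin L} (hx : x ∈ s.w) :
    fuel (jump s x) < fuel s := by
  have := Multiset.sum_map_erase (f := fun y : Fin L => L + 1 - y.val) hx
  have := Multiset.card_erase_add_one hx
  have := sum_map_succSite_add_le x
  have := card_succSite_le x
  have := x.isLt
  unfold fuel potential
  rw [show (jump s x).z = s.z from rfl]
  simp only [jump, Multiset.map_add, Multiset.sum_add, Multiset.card_add]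
  omega

lemma w_ne_zero_of_mem {s : State L} {x : Fin L} (hx : x ∈ s.w) : s.w ≠ 0 :=
  ne_of_mem_of_not_mem' hx (Multiset.notMem_zero x)

lemma fuel_pos {s : State L} (h : s.w ≠ 0) : 0 < fuel s := by
  have := Multiset.card_pos.mpr h
  unfold fuel
  omega

lemma isRule_minRule : IsRule (minRule (L := L)) := by
  refine ⟨fun s => by unfold minRule; split <;> simp_all, fun s x h => ?_⟩
  unfold minRule at h
  split at h
  · cases h
  · rw [← Option.some_inj.mp h]
    exact Multiset.mem_toFinset.mp (Finset.min'_mem _ _)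

lemma IsRule.exists_eq_some {R : State L → Option (Fin L)} (hR : IsRule R) {s : State L}
    (hw : s.w ≠ 0) : ∃ x, R s = some x :=
  Option.ne_none_iff_exists'.mp fun h => hw ((hR.1 s).mp h)

inductive IsSuccessor (s : State L) (x : Fin L) : State L → Prop
  | topple : s.z x = true → IsSuccessor s x (topple s x)
  | settle : s.z x = false → IsSuccessor s x (settle s x)
  | jump : s.z x = false → IsSuccessor s x (jump s x)

namespace IsSuccessor

variable {s t : State L} {x y : Fin L}

lemma fuel_lt (hx : x ∈ s.w) : IsSuccessor s x t → fuel t < fuel s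
  | topple h => fuel_topple_lt h
  | settle h => fuel_settle_lt hx h
  | jump _ => fuel_jump_lt hx

lemma mem_w (hy : y ∈ s.w) (hyx : y ≠ x) : IsSuccessor s x t → y ∈ t.w
  | topple _ => Multiset.mem_add.mpr (Or.inl hy)
  | settle _ => (Multiset.mem_erase_of_ne hyx).mpr hy
  | jump _ => Multiset.mem_add.mpr (Or.inl ((Multiset.mem_erase_of_ne hyx).mpr hy))

end IsSuccessor

noncomputable def expectAfter (p q : ℝ) (x : Fin L) (G : State L → ℝ) (s : State L) : ℝ :=
  if s.z x then G (topple s x) else p * G (settle s x) + q * G (jump s x)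

section expectAfter

variable {p q : ℝ} {s : State L} {x y : Fin L}

lemma expectAfter_congr {G H : State L → ℝ} (h : ∀ t, IsSuccessor s x t → G t = H t) :
    expectAfter p q x G s = expectAfter p q x H s := by
  unfold expectAfter
  cases hz : s.z x
  · simp only [Bool.false_eq_true, if_false, h _ (.settle hz), h _ (.jump hz)]
  · simp only [if_true, h _ (.topple hz)]

lemma expectAfter_nonneg (hp : 0 ≤ p) (hq : 0 ≤ q) {G : State L → ℝ}
    (hG : ∀ t, 0 ≤ G t) :
    0 ≤ expectAfter p q x G s := by
  unfold expectAfter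
  split
  · exact hG _
  · have := hG (settle s x)
    have := hG (jump s x)
    positivity

lemma expectAfter_const (hpq : p + q = 1) (a : ℝ) : expectAfter p q x (fun _ => a) s = a := by
  unfold expectAfter
  split
  · rfl
  · rw [← add_mul, hpq, one_mul]

lemma sum_expectAfter {ι : Type*} (I : Finset ι) (G : ι → State L → ℝ) :
    ∑ i ∈ I, expectAfter p q x (G i) s = expectAfter p q x (fun t => ∑ i ∈ I, G i t) s := by
  unfold expectAfter
  split
  · rfl
  · rw [Finset.sum_add_distrib, ← Finset.mul_sum, ← Finset.mul_sum]

lemma topple_topple (hxy : x ≠ y) : topple (topple s x) y = topple (topple s y) x :=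
  congrArg₂ State.mk (Function.update_comm hxy _ _ _) (add_right_comm _ _ _)

lemma settle_topple (hxy : x ≠ y) (hy : y ∈ s.w) :
    settle (topple s x) y = topple (settle s y) x :=
  congrArg₂ State.mk (Function.update_comm hxy _ _ _) (Multiset.erase_add_left_pos _ hy)

lemma jump_topple (hy : y ∈ s.w) : jump (topple s x) y = topple (jump s y) x :=
  congrArg₂ State.mk rfl <| by
    simp only [topple, jump, Multiset.erase_add_left_pos _ hy, add_right_comm]

lemma settle_settle (hxy : x ≠ y) : settle (settle s x) y = settle (settle s y) x :=
  congrArg₂ State.mk (Function.update_comm hxy _ _ _) (Multiset.erase_comm _ _ _)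

lemma jump_settle (hxy : x ≠ y) (hx : x ∈ s.w) :
    jump (settle s x) y = settle (jump s y) x :=
  congrArg₂ State.mk rfl <| by
    simp only [settle, jump, Multiset.erase_add_left_pos _ ((Multiset.mem_erase_of_ne hxy).mpr hx),
      Multiset.erase_comm]

lemma jump_jump (hxy : x ≠ y) (hx : x ∈ s.w) (hy : y ∈ s.w) :
    jump (jump s x) y = jump (jump s y) x :=
  congrArg₂ State.mk rfl <| by
    simp only [jump, Multiset.erase_add_left_pos _ ((Multiset.mem_erase_of_ne hxy.symm).mpr hy),
      Multiset.erase_add_left_pos _ ((Multiset.mem_erase_of_ne hxy).mpr hx),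
      Multiset.erase_comm, add_right_comm]

lemma expectAfter_comm (G : State L → ℝ) (hxy : x ≠ y) (hx : x ∈ s.w) (hy : y ∈ s.w) :
    expectAfter p q x (expectAfter p q y G) s = expectAfter p q y (expectAfter p q x G) s := by
  have hz : ∀ {u v : Fin L}, u ≠ v → (topple s v).z u = s.z u ∧ (settle s v).z u = s.z u :=
    fun h => ⟨Function.update_of_ne h _ _, Function.update_of_ne h _ _⟩
  have hjz : ∀ {v : Fin L}, (jump s v).z = s.z := rfl
  unfold expectAfter
  rcases hzx : s.z x <;> rcases hzy : s.z y <;>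
    simp only [(hz hxy).1, (hz hxy).2, (hz hxy.symm).1, (hz hxy.symm).2, hjz, hzx, hzy,
      Bool.false_eq_true, if_false, if_true]
  · rw [settle_settle hxy, jump_settle hxy hx, jump_settle hxy.symm hy, jump_jump hxy hx hy]
    ring
  · rw [settle_topple hxy.symm hx, jump_topple hx]
  · rw [settle_topple hxy hy, jump_topple hy]
  · rw [topple_topple hxy]

end expectAfter

section stabilizeAux

variable {p q : ℝ} {R : State L → Option (Fin L)} {c : Fin L → Bool}

lemma stabilizeAux_succ_of_eq_some {s : State L} {x : Fin L} (h : R s = some x) (n : ℕ) :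
    stabilizeAux p q R (n + 1) s c = expectAfter p q x (fun t => stabilizeAux p q R n t c) s := by
  simp only [stabilizeAux, h, expectAfter]

lemma stabilizeAux_of_w_eq_zero (hR : IsRule R) {s : State L} (h : s.w = 0) (n : ℕ) :
    stabilizeAux p q R n s c = if s.z = c then 1 else 0 := by
  cases n with
  | zero => simp [stabilizeAux, h]
  | succ n => simp only [stabilizeAux, (hR.1 s).mpr h]

lemma stabilizeAux_nonneg (hp : 0 ≤ p) (hq : 0 ≤ q) (n : ℕ) (s : State L) :
    0 ≤ stabilizeAux p q R n s c := by
  induction n generalizing s with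
  | zero => unfold stabilizeAux; split <;> norm_num
  | succ n ih =>
    rcases h : R s with _ | x
    · simp only [stabilizeAux, h]; split <;> norm_num
    · rw [stabilizeAux_succ_of_eq_some h]
      exact expectAfter_nonneg hp hq ih

lemma stabilizeAux_eq_of_fuel_le (hR : IsRule R) {n m : ℕ} {s : State L} (hn : fuel s ≤ n)
    (hm : fuel s ≤ m) : stabilizeAux p q R n s c = stabilizeAux p q R m s c := by
  induction n using Nat.strong_induction_on generalizing s m with | _ n ih
  rcases eq_or_ne s.w 0 with hw | hw
  · rw [stabilizeAux_of_w_eq_zero hR hw, stabilizeAux_of_w_eq_zero hR hw]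
  obtain ⟨n, rfl⟩ := Nat.exists_eq_add_one.mpr ((fuel_pos hw).trans_le hn)
  obtain ⟨m, rfl⟩ := Nat.exists_eq_add_one.mpr ((fuel_pos hw).trans_le hm)
  obtain ⟨x, hx⟩ := hR.exists_eq_some hw
  rw [stabilizeAux_succ_of_eq_some hx, stabilizeAux_succ_of_eq_some hx]
  refine expectAfter_congr fun t ht => ?_
  have := ht.fuel_lt (hR.2 s x hx)
  exact ih n (by omega) (by omega) (by omega)

lemma sum_stabilizeAux_eq_one (hR : IsRule R) (hpq : p + q = 1) {n : ℕ} {s : State L}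
    (hn : fuel s ≤ n) : ∑ c, stabilizeAux p q R n s c = 1 := by
  induction n using Nat.strong_induction_on generalizing s with | _ n ih
  rcases eq_or_ne s.w 0 with hw | hw
  · simp [stabilizeAux_of_w_eq_zero hR hw]
  obtain ⟨n, rfl⟩ := Nat.exists_eq_add_one.mpr ((fuel_pos hw).trans_le hn)
  obtain ⟨x, hx⟩ := hR.exists_eq_some hw
  simp only [stabilizeAux_succ_of_eq_some hx, sum_expectAfter]
  rw [expectAfter_congr (H := fun _ => 1) fun t ht => ?_, expectAfter_const hpq]
  have := ht.fuel_lt (hR.2 s x hx)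
  exact ih n (by omega) (by omega)

end stabilizeAux

section abelian

variable {p q : ℝ} {R : State L → Option (Fin L)} {F : State L → ℝ}

theorem eq_expectAfter_of_mem_w (hR : IsRule R)
    (hF : ∀ s x, R s = some x → F s = expectAfter p q x F s) (s : State L) :
    ∀ x ∈ s.w, F s = expectAfter p q x F s := by
  induction s using (measure fuel).wf.induction with | _ s ih
  intro x hx
  obtain ⟨y, hRy⟩ := hR.exists_eq_some (w_ne_zero_of_mem hx)
  have hy := hR.2 s y hRy
  rcases eq_or_ne x y with rfl | hxy
  · exact hF s x hRy
  calc F s = expectAfter p q y F s := hF s y hRy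
    _ = expectAfter p q y (expectAfter p q x F) s :=
      expectAfter_congr fun t ht => ih t (ht.fuel_lt hy) x (ht.mem_w hx hxy)
    _ = expectAfter p q x (expectAfter p q y F) s := (expectAfter_comm F hxy hx hy).symm
    _ = expectAfter p q x F s :=
      expectAfter_congr fun t ht => (ih t (ht.fuel_lt hx) y (ht.mem_w hy hxy.symm)).symm

theorem stabilizeAux_eq_of_forall_mem_w (hR : IsRule R) {c : Fin L → Bool}
    (hstable : ∀ s : State L, s.w = 0 → F s = if s.z = c then 1 else 0)
    (hF : ∀ s, ∀ x ∈ s.w, F s = expectAfter p q x F s) {n : ℕ} {s : State L}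
    (hn : fuel s ≤ n) : stabilizeAux p q R n s c = F s := by
  induction n using Nat.strong_induction_on generalizing s with | _ n ih
  rcases eq_or_ne s.w 0 with hw | hw
  · rw [stabilizeAux_of_w_eq_zero hR hw, hstable s hw]
  obtain ⟨n, rfl⟩ := Nat.exists_eq_add_one.mpr ((fuel_pos hw).trans_le hn)
  obtain ⟨x, hx⟩ := hR.exists_eq_some hw
  rw [stabilizeAux_succ_of_eq_some hx, hF s x (hR.2 s x hx)]
  refine expectAfter_congr fun t ht => ?_
  have := ht.fuel_lt (hR.2 s x hx)
  exact ih n (by omega) (by omega)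

theorem stabilizeAux_eq_of_isRule {R' : State L → Option (Fin L)} (hR : IsRule R)
    (hR' : IsRule R') {c : Fin L → Bool} {n m : ℕ} {s : State L} (hn : fuel s ≤ n)
    (hm : fuel s ≤ m) : stabilizeAux p q R n s c = stabilizeAux p q R' m s c := by
  set F := fun t => stabilizeAux p q R' (fuel t) t c
  have hF : ∀ t x, R' t = some x → F t = expectAfter p q x F t := by
    intro t x hx
    obtain ⟨k, hk⟩ := Nat.exists_eq_add_one.mpr
      (fuel_pos (w_ne_zero_of_mem (hR'.2 t x hx)))
    show stabilizeAux p q R' (fuel t) t c = _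
    rw [hk, stabilizeAux_succ_of_eq_some hx]
    refine expectAfter_congr fun u hu => ?_
    have := hu.fuel_lt (hR'.2 t x hx)
    exact stabilizeAux_eq_of_fuel_le hR' (by omega) le_rfl
  rw [stabilizeAux_eq_of_forall_mem_w hR (fun t ht => stabilizeAux_of_w_eq_zero hR' ht _)
    (eq_expectAfter_of_mem_w hR' hF) hn, stabilizeAux_eq_of_fuel_le hR' le_rfl hm]

end abelian

theorem dss_stabilization_terminates_and_is_abelian_general
    (L : ℕ) (p q : ℝ) (hp : 0 < p) (hq : 0 < q) (hpq : p + q = 1)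
    (s : State L) :
    ∃ μ : (Fin L → Bool) → ℝ,
      (∀ c : Fin L → Bool, 0 ≤ μ c) ∧ (∑ c : Fin L → Bool, μ c = 1) ∧
      ∀ R : State L → Option (Fin L), IsRule R →
        ∀ c : Fin L → Bool,
          Filter.Tendsto (fun n => stabilizeAux p q R n s c) Filter.atTop (nhds (μ c)) :=
  ⟨fun c => stabilizeAux p q minRule (fuel s) s c,
    fun _ => stabilizeAux_nonneg hp.le hq.le _ s,
    sum_stabilizeAux_eq_one isRule_minRule hpq le_rfl,
    fun _ hR _ => tendsto_atTop_of_eventually_const fun _ hn =>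
      stabilizeAux_eq_of_isRule hR isRule_minRule hn le_rfl⟩

/-- starting from any state (a stable configuration together with an arbitrary
finite collection of waiting particles), the stabilization process terminates almost surely,
and the law `μ` of the final stable configuration does not depend on the evolution rule. -/
theorem dss_stabilization_terminates_and_is_abelian
    (L : ℕ) (hL : 0 < L) (p q : ℝ) (hp : 0 < p) (hq : 0 < q) (hpq : p + q = 1)
    (s : State L) :
    ∃ μ : (Fin L → Bool) → ℝ,
      (∀ c : Fin L → Bool, 0 ≤ μ c) ∧ (∑ c : Fin L → Bool, μ c = 1) ∧
      ∀ R : State L → Option (Fin L), IsRule R →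
        ∀ c : Fin L → Bool,
          Filter.Tendsto (fun n => stabilizeAux p q R n s c) Filter.atTop (nhds (μ c)) :=
  dss_stabilization_terminates_and_is_abelian_general L p q hp hq hpq s

end DSS
end

section
/- For all integers y, τ ∈ ℤ and x ≥ 0, the free-walk probability satisfies: if |y−τ| ≤ x then P^free(y|τ,x) = Σ_{n=0}^{⌊(x−|y−τ|)/2⌋} α^{|y−τ|+2n} β^{x−|y−τ|−2n} · x! / ((|y−τ|+n)! · n! · (x−|y−τ|−2n)!), and if |y−τ| > x then P^free(y|τ,x) = 0. -/
/-!
Write `k = |y - τ|`. A walk of length `x` from `τ` to `y` makes `k + n` steps in one direction,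
`n` in the other and `x - k - 2n` zero steps, for some `n`, and there are
`x! / ((k + n)! n! (x - k - 2n)!)` such walks. The proof shows that the right-hand side
satisfies the recursion defining `Pfree`: after a Pascal-type rule for the trinomial coefficients,
this is an index shift in `n`.
-/

namespace RW

/-- Free random walk: `Pfree α β τ x y` is the probability that a walk started at `τ`,
making steps `+1`, `-1` (probability `α` each) and `0` (probability `β`), is at `y`
after `x` time steps. -/
noncomputable def Pfree (α β : ℝ) (τ : ℤ) : ℕ → ℤ → ℝ
  | 0, y => if y = τ then 1 else 0
  | x + 1, y => α * Pfree α β τ x (y - 1) + α * Pfree α β τ x (y + 1) + β * Pfree α β τ x y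

/-- Absorbed random walk: `Pabs α β τ x y` is the probability that the walk started at
`τ ≥ 1`, with an absorbing wall at height `0`, is at `y` after `x` time steps (being at `0`
means having been absorbed before or at time `x`). -/
noncomputable def Pabs (α β : ℝ) (τ : ℕ) : ℕ → ℕ → ℝ
  | 0, y => if y = τ then 1 else 0
  | x + 1, 0 => α * Pabs α β τ x 1 + Pabs α β τ x 0
  | x + 1, 1 => α * Pabs α β τ x 2 + β * Pabs α β τ x 1
  | x + 1, (y + 2) =>
      α * Pabs α β τ x (y + 1) + α * Pabs α β τ x (y + 3) + β * Pabs α β τ x (y + 2)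

/-- The error function `erf z = (2/√π) ∫_0^z e^(-t²) dt`. -/
noncomputable def erf (z : ℝ) : ℝ :=
  2 / Real.sqrt Real.pi * ∫ t in (0:ℝ)..z, Real.exp (-t ^ 2)

open Finset Nat

def trinomial (x a b : ℕ) : ℕ := x.choose a * (x - a).choose b

theorem trinomial_eq_zero_of_lt {x a b : ℕ} (h : x < a + b) : trinomial x a b = 0 := by
  unfold trinomial
  rcases lt_or_ge x a with ha | ha
  · rw [choose_eq_zero_of_lt ha, zero_mul]
  · rw [choose_eq_zero_of_lt (by omega : x - a < b), mul_zero]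

theorem trinomial_mul_factorial {x a b : ℕ} (h : a + b ≤ x) :
    trinomial x a b * (a ! * b ! * (x - a - b)!) = x ! := by
  calc trinomial x a b * (a ! * b ! * (x - a - b)!)
      = x.choose a * a ! * ((x - a).choose b * b ! * (x - a - b)!) := by
        rw [trinomial]; ring
    _ = x ! := by
      rw [choose_mul_factorial_mul_factorial (by omega : b ≤ x - a),
        choose_mul_factorial_mul_factorial (by omega : a ≤ x)]

theorem trinomial_eq_factorial_div {x a b : ℕ} (h : a + b ≤ x) :
    (trinomial x a b : ℝ) = x ! / (a ! * b ! * (x - a - b)!) := by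
  rw [eq_div_iff (by positivity)]
  exact_mod_cast trinomial_mul_factorial h

theorem trinomial_comm (x a b : ℕ) : trinomial x a b = trinomial x b a := by
  rcases le_or_gt (a + b) x with h | h
  · have h' : b + a ≤ x := by omega
    have key := (trinomial_mul_factorial h).trans (trinomial_mul_factorial h').symm
    rw [Nat.sub_right_comm, mul_comm (a !)] at key
    exact Nat.eq_of_mul_eq_mul_right (by positivity) key
  · rw [trinomial_eq_zero_of_lt h, trinomial_eq_zero_of_lt (by omega)]

theorem trinomial_succ_succ_succ (x a b : ℕ) :
    trinomial (x + 1) (a + 1) (b + 1) =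
      trinomial x a (b + 1) + trinomial x (a + 1) b + trinomial x (a + 1) (b + 1) := by
  have hshift : x.choose (a + 1) * (x - a).choose (b + 1) =
      trinomial x (a + 1) b + trinomial x (a + 1) (b + 1) := by
    rcases le_or_gt (a + 1) x with h | h
    · rw [trinomial, trinomial, show x - a = x - (a + 1) + 1 by omega, choose_succ_succ',
        Nat.mul_add]
    · simp [trinomial, choose_eq_zero_of_lt h]
  calc trinomial (x + 1) (a + 1) (b + 1)
      = x.choose a * (x - a).choose (b + 1) + x.choose (a + 1) * (x - a).choose (b + 1) := by
        rw [trinomial, Nat.add_sub_add_right, choose_succ_succ', Nat.add_mul]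
    _ = _ := by rw [hshift, ← Nat.add_assoc]; rfl

theorem trinomial_succ_succ_zero (x a : ℕ) :
    trinomial (x + 1) (a + 1) 0 = trinomial x a 0 + trinomial x (a + 1) 0 := by
  simp only [trinomial, choose_zero_right, mul_one, choose_succ_succ']

-- The total weight of the walks of length `x` with `a` up-steps and `b` down-steps.
noncomputable def walkTerm (α β : ℝ) (x a b : ℕ) : ℝ :=
  α ^ (a + b) * β ^ (x - a - b) * trinomial x a b

section walkTerm

variable (α β : ℝ)

theorem walkTerm_eq_zero_of_lt {x a b : ℕ} (h : x < a + b) : walkTerm α β x a b = 0 := by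
  rw [walkTerm, trinomial_eq_zero_of_lt h, cast_zero, mul_zero]

theorem walkTerm_comm (x a b : ℕ) : walkTerm α β x a b = walkTerm α β x b a := by
  rw [walkTerm, walkTerm, trinomial_comm, add_comm a b, Nat.sub_right_comm]

-- Both sides vanish when `x < a + b`, so the truncated subtraction is harmless.
theorem pow_succ_sub_mul_trinomial (x a b : ℕ) :
    β ^ (x + 1 - a - b) * (trinomial x a b : ℝ) = β * (β ^ (x - a - b) * trinomial x a b) := by
  rcases le_or_gt (a + b) x with h | h
  · rw [show x + 1 - a - b = x - a - b + 1 by omega, pow_succ]; ring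
  · rw [trinomial_eq_zero_of_lt h, cast_zero, mul_zero, mul_zero, mul_zero]

theorem walkTerm_succ_succ_succ (x a b : ℕ) :
    walkTerm α β (x + 1) (a + 1) (b + 1) =
      α * walkTerm α β x a (b + 1) + α * walkTerm α β x (a + 1) b +
        β * walkTerm α β x (a + 1) (b + 1) := by
  have hβ := pow_succ_sub_mul_trinomial β x (a + 1) (b + 1)
  simp only [walkTerm, trinomial_succ_succ_succ, cast_add]
  rw [show x - (a + 1) - b = x + 1 - (a + 1) - (b + 1) by omega,
    show x - a - (b + 1) = x + 1 - (a + 1) - (b + 1) by omega]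
  linear_combination α ^ (a + 1 + (b + 1)) * hβ

theorem walkTerm_succ_succ_zero (x a : ℕ) :
    walkTerm α β (x + 1) (a + 1) 0 = α * walkTerm α β x a 0 + β * walkTerm α β x (a + 1) 0 := by
  have hβ := pow_succ_sub_mul_trinomial β x (a + 1) 0
  simp only [walkTerm, trinomial_succ_succ_zero, cast_add]
  rw [show x - a - 0 = x + 1 - (a + 1) - 0 by omega]
  linear_combination α ^ (a + 1 + 0) * hβ

theorem walkTerm_succ_zero_zero (x : ℕ) :
    walkTerm α β (x + 1) 0 0 = β * walkTerm α β x 0 0 := by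
  simp only [walkTerm, trinomial, choose_zero_right, Nat.sub_zero, pow_succ]
  ring

end walkTerm

noncomputable def walkSum (α β : ℝ) (x k : ℕ) : ℝ :=
  ∑ n ∈ range (x + 1), walkTerm α β x (k + n) n

section walkSum

variable (α β : ℝ)

theorem walkSum_eq_sum_range_succ (x k : ℕ) :
    walkSum α β x k = ∑ n ∈ range (x + 2), walkTerm α β x (k + n) n := by
  rw [walkSum, sum_range_succ _ (x + 1), walkTerm_eq_zero_of_lt α β (by omega), add_zero]

theorem walkSum_zero (k : ℕ) : walkSum α β 0 k = if k = 0 then 1 else 0 := by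
  cases k <;> simp [walkSum, walkTerm, trinomial]

theorem walkSum_succ_succ (x k : ℕ) :
    walkSum α β (x + 1) (k + 1) =
      α * walkSum α β x k + α * walkSum α β x (k + 2) + β * walkSum α β x (k + 1) := by
  have hterm (n : ℕ) : walkTerm α β (x + 1) (k + 1 + (n + 1)) (n + 1) =
      α * walkTerm α β x (k + (n + 1)) (n + 1) + α * walkTerm α β x (k + 2 + n) n +
        β * walkTerm α β x (k + 1 + (n + 1)) (n + 1) := by
    rw [show k + 1 + (n + 1) = k + n + 1 + 1 by ring, show k + 2 + n = k + n + 1 + 1 by ring]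
    exact walkTerm_succ_succ_succ α β x (k + n + 1) n
  have hL : walkSum α β (x + 1) (k + 1) =
      ∑ n ∈ range (x + 1), walkTerm α β (x + 1) (k + 1 + (n + 1)) (n + 1) +
        walkTerm α β (x + 1) (k + 1) 0 := sum_range_succ' _ _
  have hk (j : ℕ) : walkSum α β x j =
      ∑ n ∈ range (x + 1), walkTerm α β x (j + (n + 1)) (n + 1) + walkTerm α β x j 0 :=
    (walkSum_eq_sum_range_succ α β x j).trans (sum_range_succ' _ _)
  rw [hL, hk k, hk (k + 1), walkSum, sum_congr rfl fun n _ => hterm n, walkTerm_succ_succ_zero]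
  simp only [sum_add_distrib, mul_add, mul_sum]
  ring

theorem walkSum_succ_zero (x : ℕ) :
    walkSum α β (x + 1) 0 = α * walkSum α β x 1 + α * walkSum α β x 1 + β * walkSum α β x 0 := by
  have hterm (n : ℕ) : walkTerm α β (x + 1) (n + 1) (n + 1) =
      α * walkTerm α β x (1 + n) n + α * walkTerm α β x (1 + n) n +
        β * walkTerm α β x (n + 1) (n + 1) := by
    rw [walkTerm_succ_succ_succ, walkTerm_comm α β x n (n + 1), add_comm 1 n]
  have hL : walkSum α β (x + 1) 0 =
      ∑ n ∈ range (x + 1), walkTerm α β (x + 1) (n + 1) (n + 1) + walkTerm α β (x + 1) 0 0 := by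
    rw [walkSum, sum_range_succ']; simp only [zero_add]
  have h0 : walkSum α β x 0 =
      ∑ n ∈ range (x + 1), walkTerm α β x (n + 1) (n + 1) + walkTerm α β x 0 0 := by
    rw [walkSum_eq_sum_range_succ, sum_range_succ']; simp only [zero_add]
  rw [hL, h0, walkSum, sum_congr rfl fun n _ => hterm n, walkTerm_succ_zero_zero]
  simp only [sum_add_distrib, mul_add, mul_sum]
  ring

theorem walkSum_succ_natAbs (x : ℕ) (d : ℤ) :
    walkSum α β (x + 1) d.natAbs =
      α * walkSum α β x (d - 1).natAbs + α * walkSum α β x (d + 1).natAbs +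
        β * walkSum α β x d.natAbs := by
  obtain ⟨k, rfl | rfl⟩ | rfl : (∃ k : ℕ, d = k + 1 ∨ d = -(k + 1)) ∨ d = 0 := by
    rcases lt_trichotomy d 0 with h | h | h
    · exact Or.inl ⟨(-d - 1).toNat, Or.inr (by omega)⟩
    · exact Or.inr h
    · exact Or.inl ⟨(d - 1).toNat, Or.inl (by omega)⟩
  · rw [show ((k : ℤ) + 1).natAbs = k + 1 by omega, show ((k : ℤ) + 1 - 1).natAbs = k by omega,
      show ((k : ℤ) + 1 + 1).natAbs = k + 2 by omega, walkSum_succ_succ]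
  · rw [show (-((k : ℤ) + 1)).natAbs = k + 1 by omega,
      show (-((k : ℤ) + 1) - 1).natAbs = k + 2 by omega,
      show (-((k : ℤ) + 1) + 1).natAbs = k by omega, walkSum_succ_succ]
    ring
  · exact walkSum_succ_zero α β x

theorem walkSum_eq_zero_of_lt {x k : ℕ} (h : x < k) : walkSum α β x k = 0 :=
  sum_eq_zero fun n _ => walkTerm_eq_zero_of_lt α β (by omega)

theorem walkSum_eq_sum_factorial {x k : ℕ} (h : k ≤ x) :
    walkSum α β x k = ∑ n ∈ range ((x - k) / 2 + 1),
      α ^ (k + 2 * n) * β ^ (x - k - 2 * n) *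
        ((x ! : ℝ) / ((k + n)! * n ! * (x - k - 2 * n)!)) := by
  rw [walkSum, ← sum_subset (range_subset_range.2 (by omega : (x - k) / 2 + 1 ≤ x + 1))
    fun n _ hn => walkTerm_eq_zero_of_lt α β (by rw [mem_range] at hn; omega)]
  refine sum_congr rfl fun n hn => ?_
  have hkn : k + n + n ≤ x := by rw [mem_range] at hn; omega
  rw [walkTerm, trinomial_eq_factorial_div hkn, show k + n + n = k + 2 * n by ring,
    show x - (k + n) - n = x - k - 2 * n by omega]

end walkSum

theorem pfree_eq_walkSum (α β : ℝ) (τ : ℤ) (x : ℕ) (y : ℤ) :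
    Pfree α β τ x y = walkSum α β x (y - τ).natAbs := by
  induction x generalizing y with
  | zero => simp [Pfree, walkSum_zero, sub_eq_zero]
  | succ x ih =>
    rw [Pfree, ih, ih, ih, sub_right_comm, add_sub_right_comm, walkSum_succ_natAbs]

theorem pfree_explicit_formula_general
    (p q : ℝ) (τ y : ℤ) (x : ℕ) :
    ((y - τ).natAbs ≤ x →
      Pfree (p * q) (1 - 2 * (p * q)) τ x y =
        ∑ n ∈ Finset.range ((x - (y - τ).natAbs) / 2 + 1),
          (p * q) ^ ((y - τ).natAbs + 2 * n) *
            (1 - 2 * (p * q)) ^ (x - (y - τ).natAbs - 2 * n) *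
            ((Nat.factorial x : ℝ) /
              ((Nat.factorial ((y - τ).natAbs + n) : ℝ) * (Nat.factorial n : ℝ) *
                (Nat.factorial (x - (y - τ).natAbs - 2 * n) : ℝ)))) ∧
    (x < (y - τ).natAbs → Pfree (p * q) (1 - 2 * (p * q)) τ x y = 0) := by
  rw [pfree_eq_walkSum]
  exact ⟨walkSum_eq_sum_factorial _ _, walkSum_eq_zero_of_lt _ _⟩

/-- explicit formula for the free-walk probabilities. -/
theorem pfree_explicit_formula
    (p q : ℝ) (hp : 0 < p) (hq : 0 < q) (hpq : p + q = 1) (τ y : ℤ) (x : ℕ) :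
    ((y - τ).natAbs ≤ x →
      Pfree (p * q) (1 - 2 * (p * q)) τ x y =
        ∑ n ∈ Finset.range ((x - (y - τ).natAbs) / 2 + 1),
          (p * q) ^ ((y - τ).natAbs + 2 * n) *
            (1 - 2 * (p * q)) ^ (x - (y - τ).natAbs - 2 * n) *
            ((Nat.factorial x : ℝ) /
              ((Nat.factorial ((y - τ).natAbs + n) : ℝ) * (Nat.factorial n : ℝ) *
                (Nat.factorial (x - (y - τ).natAbs - 2 * n) : ℝ)))) ∧
    (x < (y - τ).natAbs → Pfree (p * q) (1 - 2 * (p * q)) τ x y = 0) :=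
  pfree_explicit_formula_general p q τ y x

end RW
end

section
/- For all integers τ ≥ 1 and x ≥ 0, the absorption probability of the absorbed walk satisfies P(0|τ,x) = 1 − Σ_{y=1}^{2τ} P^free(y|τ,x). -/
namespace RW

/-!
Reflection principle: for `y ≥ 1` the absorbed walk equals the free walk at `y` minus the free
walk at `-y`, and the free walk from `τ` is symmetric about `τ`. Hence the absorbed mass grows by
`α (P^free(1) - P^free(-1))` per step, which is exactly the loss of free mass from the window
`[1, 2τ]`: that loss telescopes to boundary terms, which the symmetry identifies.
-/

lemma pfree_two_mul_sub (α β : ℝ) (τ : ℤ) (x : ℕ) (y : ℤ) :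
    Pfree α β τ x (2 * τ - y) = Pfree α β τ x y := by
  induction x generalizing y with
  | zero => exact if_congr (by omega) rfl rfl
  | succ x ih =>
    simp only [Pfree]
    rw [← ih (y - 1), ← ih (y + 1), ← ih y, show 2 * τ - (y - 1) = 2 * τ - y + 1 by ring,
      show 2 * τ - (y + 1) = 2 * τ - y - 1 by ring]
    ring

lemma pabs_eq_pfree_sub_pfree_neg (α β : ℝ) (τ x : ℕ) {y : ℕ} (hy : 1 ≤ y) :
    Pabs α β τ x y = Pfree α β τ x y - Pfree α β τ x (-y) := by
  induction x generalizing y with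
  | zero =>
    simp only [Pabs, Pfree, Nat.cast_inj, if_neg (show -(y : ℤ) ≠ τ by omega), sub_zero]
  | succ x ih =>
    rcases y with _ | _ | z
    · omega
    · simp only [Pabs, Pfree, ih (le_refl 1), ih (by norm_num : 1 ≤ 2)]
      norm_num
      ring
    · simp only [Pabs, Pfree, ih (by omega : 1 ≤ z + 1), ih (by omega : 1 ≤ z + 1 + 1),
        ih (by omega : 1 ≤ z + 3)]
      push_cast
      ring_nf

lemma sum_Icc_second_difference {R : Type*} [CommRing R] (F : ℤ → R) (n : ℕ) :
    ∑ y ∈ Finset.Icc 1 n, (F ((y : ℤ) - 1) + F ((y : ℤ) + 1) - 2 * F y) =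
      F 0 - F 1 + (F (n + 1) - F n) := by
  induction n with
  | zero => simp
  | succ n ih =>
    rw [Finset.sum_Icc_succ_top (by omega), ih]
    push_cast
    rw [add_sub_cancel_right]
    ring

lemma sum_Icc_pfree_succ (α : ℝ) (τ : ℤ) (x n : ℕ) :
    ∑ y ∈ Finset.Icc 1 n, Pfree α (1 - 2 * α) τ (x + 1) y =
      ∑ y ∈ Finset.Icc 1 n, Pfree α (1 - 2 * α) τ x y +
        α * (Pfree α (1 - 2 * α) τ x 0 - Pfree α (1 - 2 * α) τ x 1 +
          (Pfree α (1 - 2 * α) τ x (n + 1) - Pfree α (1 - 2 * α) τ x n)) := by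
  rw [← sum_Icc_second_difference, Finset.mul_sum, ← Finset.sum_add_distrib]
  refine Finset.sum_congr rfl fun y _ => ?_
  rw [Pfree]
  ring

theorem absorption_probability_via_free_walk_general
    (p q : ℝ)
    (τ : ℕ) (x : ℕ) :
    Pabs (p * q) (1 - 2 * (p * q)) τ x 0 =
      1 - ∑ y ∈ Finset.Icc 1 (2 * τ),
        Pfree (p * q) (1 - 2 * (p * q)) (τ : ℤ) x (y : ℤ) := by
  set α := p * q
  induction x with
  | zero =>
    simp only [Pabs, Pfree, Nat.cast_inj, Finset.sum_ite_eq', Finset.mem_Icc]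
    split_ifs with h_start h_window <;> norm_num <;> omega
  | succ x ih =>
    have reflect_zero : Pfree α (1 - 2 * α) τ x (2 * τ) = Pfree α (1 - 2 * α) τ x 0 := by
      simpa using pfree_two_mul_sub α (1 - 2 * α) τ x 0
    have reflect_neg_one :
        Pfree α (1 - 2 * α) τ x (2 * τ + 1) = Pfree α (1 - 2 * α) τ x (-1) := by
      simpa using pfree_two_mul_sub α (1 - 2 * α) τ x (-1)
    rw [Pabs, ih, pabs_eq_pfree_sub_pfree_neg _ _ _ _ le_rfl, sum_Icc_pfree_succ]
    push_cast
    linear_combination α * reflect_neg_one - α * reflect_zero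

/-- the absorption probability in terms of the free walk:
`P(0|τ,x) = 1 - Σ_{y=1}^{2τ} P^free(y|τ,x)`. -/
theorem absorption_probability_via_free_walk
    (p q : ℝ) (hp : 0 < p) (hq : 0 < q) (hpq : p + q = 1)
    (τ : ℕ) (hτ : 1 ≤ τ) (x : ℕ) :
    Pabs (p * q) (1 - 2 * (p * q)) τ x 0 =
      1 - ∑ y ∈ Finset.Icc 1 (2 * τ),
        Pfree (p * q) (1 - 2 * (p * q)) (τ : ℤ) x (y : ℤ) :=
  absorption_probability_via_free_walk_general p q τ x

end RW
end
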